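/- In ℂ[S₃] define e_s = (1/2)(id + (1 2)), e_a = (1/2)(id − (1 2)), f_s = (1/6)·Σ_{p∈S₃} p, f_a = (1/6)·Σ_{p∈S₃} sign(p)·p, and the idempotents h_s = e_s − f_s and h_a = e_a − f_a. Then: (1) η·h_s ≠ h_s and η·h_a ≠ h_a; (2) for ν ∈ ℂ, ξ_ν·h_s = h_s if and only if ν = 0; (3) for ν ∈ ℂ, ξ_ν·h_a = h_a if and only if ν = 2; consequently (4) ξ₀·ℂ[S₃] = h_s·ℂ[S₃] and ξ₂·ℂ[S₃] = h_a·ℂ[S₃]. -/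

import Mathlib

/-!
Everything is a finite computation in the basis of `ℂ[S₃]` given by the six permutations, using
the multiplication table of `S₃`. One finds `η h_s = 0`, `η h_a = h_a + (nonzero)`,
`ξ_ν h_s = h_s + ν · (nonzero)` and `ξ_ν h_a = h_a + (ν - 2) · (nonzero)`, together with
`h_s ξ₀ = ξ₀` and `h_a ξ₂ = ξ₂`. Finally, if `x y = y` and `y x = x` then `x` and `y` generate
the same right ideal, since each is a left multiple of the other.
-/

/-- The idempotent `ξ_ν = (1/3)(id + ν(2 3) + (1−ν)(1 2) − ν·c + (ν−1)·c² − (1 3))` of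
`ℂ[S₃]`, where `c` is the 3-cycle `1↦2↦3↦1` (0-based: `finRotate 3`). -/
noncomputable def xi (ν : ℂ) : MonoidAlgebra ℂ (Equiv.Perm (Fin 3)) :=
  (3⁻¹ : ℂ) • (MonoidAlgebra.single 1 1
    + ν • MonoidAlgebra.single (Equiv.swap (1 : Fin 3) 2) 1
    + (1 - ν) • MonoidAlgebra.single (Equiv.swap (0 : Fin 3) 1) 1
    - ν • MonoidAlgebra.single (finRotate 3) 1
    + (ν - 1) • MonoidAlgebra.single (finRotate 3 * finRotate 3) 1
    - MonoidAlgebra.single (Equiv.swap (0 : Fin 3) 2) 1)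

/-- The idempotent `η = (1/3)(id − (1 2) − c + (1 3))` of `ℂ[S₃]`. -/
noncomputable def eta : MonoidAlgebra ℂ (Equiv.Perm (Fin 3)) :=
  (3⁻¹ : ℂ) • (MonoidAlgebra.single 1 1
    - MonoidAlgebra.single (Equiv.swap (0 : Fin 3) 1) 1
    - MonoidAlgebra.single (finRotate 3) 1
    + MonoidAlgebra.single (Equiv.swap (0 : Fin 3) 2) 1)

/-- `e_s = (1/2)(id + (1 2))` (0-based: `(1 2)` is `swap 0 1`). -/
noncomputable def eS : MonoidAlgebra ℂ (Equiv.Perm (Fin 3)) :=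
  (2⁻¹ : ℂ) • (MonoidAlgebra.single 1 1 + MonoidAlgebra.single (Equiv.swap (0 : Fin 3) 1) 1)

/-- `e_a = (1/2)(id − (1 2))`. -/
noncomputable def eA : MonoidAlgebra ℂ (Equiv.Perm (Fin 3)) :=
  (2⁻¹ : ℂ) • (MonoidAlgebra.single 1 1 - MonoidAlgebra.single (Equiv.swap (0 : Fin 3) 1) 1)

/-- `f_s = (1/6)·Σ_{p∈S₃} p`. -/
noncomputable def fS : MonoidAlgebra ℂ (Equiv.Perm (Fin 3)) :=
  (6⁻¹ : ℂ) • ∑ p : Equiv.Perm (Fin 3), MonoidAlgebra.single p 1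

/-- `f_a = (1/6)·Σ_{p∈S₃} sign(p)·p`. -/
noncomputable def fA : MonoidAlgebra ℂ (Equiv.Perm (Fin 3)) :=
  (6⁻¹ : ℂ) • ∑ p : Equiv.Perm (Fin 3),
    MonoidAlgebra.single p (((Equiv.Perm.sign p : ℤ) : ℂ))

/-- `h_s = e_s − f_s`. -/
noncomputable def hS : MonoidAlgebra ℂ (Equiv.Perm (Fin 3)) := eS - fS

/-- `h_a = e_a − f_a`. -/
noncomputable def hA : MonoidAlgebra ℂ (Equiv.Perm (Fin 3)) := eA - fA

theorem Set.range_mul_left_subset_of_mul_eq {S : Type*} [Semigroup S] {a b : S}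
    (h : b * a = a) : Set.range (a * ·) ⊆ Set.range (b * ·) := by
  rintro _ ⟨x, rfl⟩
  exact ⟨a * x, by simp only [← mul_assoc, h]⟩

theorem Set.range_mul_left_eq_of_mul_eq {S : Type*} [Semigroup S] {a b : S}
    (hab : a * b = b) (hba : b * a = a) : Set.range (a * ·) = Set.range (b * ·) :=
  (range_mul_left_subset_of_mul_eq hba).antisymm (range_mul_left_subset_of_mul_eq hab)

local notation "σ₀₁" => Equiv.swap (0 : Fin 3) 1
local notation "σ₁₂" => Equiv.swap (1 : Fin 3) 2
local notation "σ₀₂" => Equiv.swap (0 : Fin 3) 2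
local notation "γ" => finRotate 3
local notation "δ" g:max => MonoidAlgebra.single g (1 : ℂ)

theorem perm_fin_three_univ :
    (Finset.univ : Finset (Equiv.Perm (Fin 3))) = {1, σ₀₁, σ₁₂, σ₀₂, γ, γ * γ} := by
  decide

theorem perm_fin_three_sum {M : Type*} [AddCommMonoid M] (f : Equiv.Perm (Fin 3) → M) :
    ∑ p, f p = f 1 + f σ₀₁ + f σ₁₂ + f σ₀₂ + f γ + f (γ * γ) := by
  rw [perm_fin_three_univ, Finset.sum_insert (by decide), Finset.sum_insert (by decide),
    Finset.sum_insert (by decide), Finset.sum_insert (by decide), Finset.sum_insert (by decide),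
    Finset.sum_singleton]
  abel

theorem perm_fin_three_sign :
    Equiv.Perm.sign σ₀₁ = -1 ∧ Equiv.Perm.sign σ₁₂ = -1 ∧ Equiv.Perm.sign σ₀₂ = -1 ∧
    Equiv.Perm.sign γ = 1 ∧ Equiv.Perm.sign (γ * γ) = 1 := by
  decide

theorem perm_fin_three_mul_table :
    σ₀₁ * σ₀₁ = 1 ∧ σ₀₁ * σ₁₂ = γ ∧ σ₀₁ * σ₀₂ = γ * γ ∧ σ₀₁ * γ = σ₁₂ ∧ σ₀₁ * (γ * γ) = σ₀₂ ∧
    σ₁₂ * σ₀₁ = γ * γ ∧ σ₁₂ * σ₁₂ = 1 ∧ σ₁₂ * σ₀₂ = γ ∧ σ₁₂ * γ = σ₀₂ ∧ σ₁₂ * (γ * γ) = σ₀₁ ∧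
    σ₀₂ * σ₀₁ = γ ∧ σ₀₂ * σ₁₂ = γ * γ ∧ σ₀₂ * σ₀₂ = 1 ∧ σ₀₂ * γ = σ₀₁ ∧ σ₀₂ * (γ * γ) = σ₁₂ ∧
    γ * σ₀₁ = σ₀₂ ∧ γ * σ₁₂ = σ₀₁ ∧ γ * σ₀₂ = σ₁₂ ∧ γ * (γ * γ) = 1 ∧
    γ * γ * σ₀₁ = σ₁₂ ∧ γ * γ * σ₁₂ = σ₀₂ ∧ γ * γ * σ₀₂ = σ₀₁ ∧ γ * γ * γ = 1 ∧
    γ * γ * (γ * γ) = γ := by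
  decide

theorem hS_eq : hS = (6⁻¹ : ℂ) •
    ((2 : ℂ) • δ 1 + (2 : ℂ) • δ σ₀₁ - δ σ₁₂ - δ σ₀₂ - δ γ - δ (γ * γ)) := by
  rw [hS, eS, fS, perm_fin_three_sum]
  module

theorem hA_eq : hA = (6⁻¹ : ℂ) •
    ((2 : ℂ) • δ 1 - (2 : ℂ) • δ σ₀₁ + δ σ₁₂ + δ σ₀₂ - δ γ - δ (γ * γ)) := by
  rw [hA, eA, fA, perm_fin_three_sum]
  simp only [Equiv.Perm.sign_one, perm_fin_three_sign, Units.val_neg, Units.val_one,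
    Int.cast_neg, Int.cast_one, MonoidAlgebra.single_neg]
  module

theorem eta_mul_hS : eta * hS = 0 := by
  rw [eta, hS_eq]
  simp only [smul_mul_assoc, mul_smul_comm, add_mul, mul_add, sub_mul, mul_sub,
    MonoidAlgebra.single_mul_single, one_mul, mul_one, perm_fin_three_mul_table]
  module

theorem eta_mul_hA : eta * hA = hA + (6⁻¹ : ℂ) • (δ σ₀₂ + δ (γ * γ) - δ σ₁₂ - δ γ) := by
  rw [eta, hA_eq]
  simp only [smul_mul_assoc, mul_smul_comm, add_mul, mul_add, sub_mul, mul_sub,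
    MonoidAlgebra.single_mul_single, one_mul, mul_one, perm_fin_three_mul_table]
  module

theorem xi_mul_hS (ν : ℂ) : xi ν * hS =
    hS + (ν / 6) • ((2 : ℂ) • δ σ₁₂ + (2 : ℂ) • δ (γ * γ) - δ 1 - δ σ₀₁ - δ σ₀₂ - δ γ) := by
  rw [xi, hS_eq]
  simp only [smul_mul_assoc, mul_smul_comm, add_mul, mul_add, sub_mul, mul_sub,
    MonoidAlgebra.single_mul_single, one_mul, mul_one, perm_fin_three_mul_table]
  module

theorem xi_mul_hA (ν : ℂ) : xi ν * hA = hA + ((ν - 2) / 6) • (δ 1 + δ σ₀₂ - δ σ₀₁ - δ γ) := by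
  rw [xi, hA_eq]
  simp only [smul_mul_assoc, mul_smul_comm, add_mul, mul_add, sub_mul, mul_sub,
    MonoidAlgebra.single_mul_single, one_mul, mul_one, perm_fin_three_mul_table]
  module

theorem hS_mul_xi_zero : hS * xi 0 = xi 0 := by
  rw [hS_eq, xi]
  simp only [smul_mul_assoc, mul_smul_comm, add_mul, mul_add, sub_mul, mul_sub,
    MonoidAlgebra.single_mul_single, one_mul, mul_one, perm_fin_three_mul_table]
  module

theorem hA_mul_xi_two : hA * xi 2 = xi 2 := by
  rw [hA_eq, xi]
  simp only [smul_mul_assoc, mul_smul_comm, add_mul, mul_add, sub_mul, mul_sub,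
    MonoidAlgebra.single_mul_single, one_mul, mul_one, perm_fin_three_mul_table]
  module

theorem eta_mul_hS_ne_self : eta * hS ≠ hS := by
  rw [eta_mul_hS]
  intro h
  simpa +decide [hS_eq] using congrArg (·.coeff 1) h.symm

theorem eta_mul_hA_ne_self : eta * hA ≠ hA := by
  have hE : δ σ₀₂ + δ (γ * γ) - δ σ₁₂ - δ γ ≠ 0 := fun h => by
    simpa +decide using congrArg (·.coeff σ₀₂) h
  rw [eta_mul_hA, ne_eq, add_eq_left, smul_eq_zero, not_or]
  exact ⟨by norm_num, hE⟩

theorem xi_mul_hS_eq_self_iff (ν : ℂ) : xi ν * hS = hS ↔ ν = 0 := by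
  have hW : (2 : ℂ) • δ σ₁₂ + (2 : ℂ) • δ (γ * γ) - δ 1 - δ σ₀₁ - δ σ₀₂ - δ γ ≠ 0 := fun h => by
    simpa +decide using congrArg (·.coeff σ₁₂) h
  rw [xi_mul_hS, add_eq_left, smul_eq_zero, or_iff_left hW, div_eq_zero_iff,
    or_iff_left (by norm_num)]

theorem xi_mul_hA_eq_self_iff (ν : ℂ) : xi ν * hA = hA ↔ ν = 2 := by
  have hV : δ 1 + δ σ₀₂ - δ σ₀₁ - δ γ ≠ 0 := fun h => by
    simpa +decide using congrArg (·.coeff 1) h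
  rw [xi_mul_hA, add_eq_left, smul_eq_zero, or_iff_left hV, div_eq_zero_iff,
    or_iff_left (by norm_num), sub_eq_zero]

theorem stmt19 :
    (eta * hS ≠ hS ∧ eta * hA ≠ hA) ∧
    (∀ ν : ℂ, xi ν * hS = hS ↔ ν = 0) ∧
    (∀ ν : ℂ, xi ν * hA = hA ↔ ν = 2) ∧
    Set.range (fun x => xi 0 * x) = Set.range (fun x => hS * x) ∧
    Set.range (fun x => xi 2 * x) = Set.range (fun x => hA * x) :=
  ⟨⟨eta_mul_hS_ne_self, eta_mul_hA_ne_self⟩, xi_mul_hS_eq_self_iff, xi_mul_hA_eq_self_iff,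
    Set.range_mul_left_eq_of_mul_eq ((xi_mul_hS_eq_self_iff 0).2 rfl) hS_mul_xi_zero,
    Set.range_mul_left_eq_of_mul_eq ((xi_mul_hA_eq_self_iff 2).2 rfl) hA_mul_xi_two⟩
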